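/- arXiv:1911.06960 — 4 statements merged into one kernel-verified Lean document; each statement's English description precedes it below -/
import Mathlib

section
/- Let 1 < α ≤ 2 and define the fractional centered difference coefficients c_k^(α) = (−1)^k Γ(α+1) / (Γ(α/2 − k + 1) Γ(α/2 + k + 1)) for k ∈ ℤ (where Γ is the real Gamma function, and c_k^(α) is taken to be 0 when α/2 − k + 1 or α/2 + k + 1 is a nonpositive integer). Then c_0^(α) > 0, c_k^(α) = c_{−k}^(α) for every k ∈ ℤ, and c_k^(α) ≤ 0 for every integer k ≥ 1. -/
/-- The fractional centered difference coefficients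
`c_k^(α) = (−1)^k Γ(α+1) / (Γ(α/2 − k + 1) Γ(α/2 + k + 1))`.
Since `Real.Gamma` vanishes at nonpositive integers and division by zero is zero in Lean,
this is `0` when one of the Gamma arguments is a nonpositive integer, as required. -/
noncomputable def fracCoeff (α : ℝ) (k : ℤ) : ℝ :=
  (-1 : ℝ) ^ k * Real.Gamma (α + 1) /
    (Real.Gamma (α / 2 - k + 1) * Real.Gamma (α / 2 + k + 1))

lemma gamma_sign (α : ℝ) (hα1 : 1 < α) (hα2 : α ≤ 2) :
    ∀ n : ℕ, 0 ≤ (-1 : ℝ)^n * Real.Gamma (α/2 - n) := by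
  intro n
  induction n with
  | zero =>
    simpa using (Real.Gamma_pos_of_pos (show (0:ℝ) < α/2 by linarith)).le
  | succ n ih =>
    have hc : ((n+1 : ℕ) : ℝ) = (n:ℝ) + 1 := by push_cast; ring
    rw [hc]
    rcases eq_or_lt_of_le (show α/2 - ((n:ℝ)+1) ≤ 0 by
      have : (0:ℝ) ≤ n := Nat.cast_nonneg n
      linarith) with h | h
    · rw [h, Real.Gamma_zero, mul_zero]
    · have hx : α/2 - ((n:ℝ)+1) ≠ 0 := h.ne
      have hrec := Real.Gamma_add_one hx
      have harg : α/2 - ((n:ℝ)+1) + 1 = α/2 - n := by ring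
      rw [harg] at hrec
      have hg : Real.Gamma (α/2 - ((n:ℝ)+1)) = Real.Gamma (α/2 - n) / (α/2 - ((n:ℝ)+1)) := by
        rw [eq_div_iff hx, hrec]; ring
      rw [hg, pow_succ, div_eq_mul_inv]
      have hinv : 0 < -(α/2 - ((n:ℝ)+1))⁻¹ := by
        rw [neg_pos]
        exact inv_lt_zero.mpr h
      nlinarith [mul_nonneg ih hinv.le]

theorem stmt0 (α : ℝ) (hα1 : 1 < α) (hα2 : α ≤ 2) :
    0 < fracCoeff α 0 ∧
    (∀ k : ℤ, fracCoeff α k = fracCoeff α (-k)) ∧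
    (∀ k : ℤ, 1 ≤ k → fracCoeff α k ≤ 0) := by
  have hA : 0 < Real.Gamma (α + 1) := Real.Gamma_pos_of_pos (by linarith)
  refine ⟨?_, ?_, ?_⟩
  · have h1 : 0 < Real.Gamma (α/2 + 1) := Real.Gamma_pos_of_pos (by linarith)
    have h0 : fracCoeff α 0 = Real.Gamma (α+1) / (Real.Gamma (α/2+1) * Real.Gamma (α/2+1)) := by
      simp [fracCoeff]
    rw [h0]
    positivity
  · intro k
    simp only [fracCoeff]
    have h1 : ((-1:ℝ))^(-k) = (-1:ℝ)^k := by
      rw [zpow_neg, ← inv_zpow, inv_neg, inv_one]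
    rw [h1]
    push_cast
    ring_nf
  · intro k hk
    set n := (k-1).toNat with hn
    have hkn : k = (n : ℤ) + 1 := by omega
    have hP : 0 < Real.Gamma (α/2 + k + 1) := by
      apply Real.Gamma_pos_of_pos
      have : (1:ℝ) ≤ (k:ℝ) := by exact_mod_cast hk
      linarith
    have hsgn := gamma_sign α hα1 hα2 n
    have harg : α/2 - (k:ℝ) + 1 = α/2 - n := by
      rw [hkn]; push_cast; ring
    have hpow : (-1:ℝ)^k = (-1:ℝ)^(n+1) := by
      rw [hkn]
      rw [show ((n:ℤ)+1) = ((n+1 : ℕ) : ℤ) by push_cast; ring, zpow_natCast]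
    simp only [fracCoeff, harg, hpow]
    rcases eq_or_ne (Real.Gamma (α/2 - n)) 0 with hg0 | hg0
    · rw [hg0, zero_mul, div_zero]
    · have hgpos : 0 < (-1:ℝ)^n * Real.Gamma (α/2 - n) := by
        rcases hsgn.lt_or_eq with h | h
        · exact h
        · exfalso; apply hg0
          rcases Nat.even_or_odd n with he | ho
          · rw [he.neg_one_pow, one_mul] at h; exact h.symm
          · rw [ho.neg_one_pow] at h
            have := h.symm
            linarith [h]
      rcases Nat.even_or_odd n with he | ho
      · have h1 : ((-1:ℝ))^n = 1 := he.neg_one_pow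
        rw [h1, one_mul] at hgpos
        have h2 : ((-1:ℝ))^(n+1) = -1 := by
          rw [pow_succ, h1]; ring
        rw [h2]
        apply le_of_lt
        apply div_neg_of_neg_of_pos
        · linarith
        · positivity
      · have h1 : ((-1:ℝ))^n = -1 := ho.neg_one_pow
        rw [h1] at hgpos
        have hgneg : Real.Gamma (α/2 - n) < 0 := by linarith
        have h2 : ((-1:ℝ))^(n+1) = 1 := by
          rw [pow_succ, h1]; ring
        rw [h2, one_mul]
        apply le_of_lt
        apply div_neg_of_pos_of_neg
        · exact hA
        · exact mul_neg_of_neg_of_pos hgneg hP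
end

section
/- Let 1 < α ≤ 2 and let c_k^(α) be the fractional centered difference coefficients. Then the series ∑_{k=1}^{∞} c_k^(α) converges absolutely and ∑_{k=1}^{∞} c_k^(α) = −c_0^(α)/2; equivalently, ∑_{k∈ℤ} c_k^(α) = 0. -/
open Real Filter Finset

private lemma fracCoeff_neg (α : ℝ) (k : ℤ) : fracCoeff α (-k) = fracCoeff α k := by
  unfold fracCoeff
  have h1 : ((-1 : ℝ)) ^ (-k) = (-1 : ℝ) ^ k := by
    rw [zpow_neg]
    rcases Int.even_or_odd k with h | h
    · rw [h.neg_one_zpow]; norm_num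
    · rw [h.neg_one_zpow]; norm_num
  have h2 : α / 2 - ((-k : ℤ) : ℝ) + 1 = α / 2 + (k : ℤ) + 1 := by push_cast; ring
  have h3 : α / 2 + ((-k : ℤ) : ℝ) + 1 = α / 2 - (k : ℤ) + 1 := by push_cast; ring
  rw [h1, h2, h3, mul_comm (Real.Gamma (α / 2 + (k:ℤ) + 1))]

private lemma fracCoeff_rec (α : ℝ) (hα : 0 < α) (k : ℕ) :
    fracCoeff α ((k : ℤ) + 1) * (α / 2 + (k : ℝ) + 1) =
      fracCoeff α (k : ℤ) * ((k : ℝ) - α / 2) := by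
  have e1 : ((-1 : ℝ)) ^ ((k : ℤ) + 1) = -((-1 : ℝ) ^ (k : ℤ)) := by
    rw [zpow_add_one₀ (by norm_num : (-1:ℝ) ≠ 0)]; ring
  have hy0 : (0:ℝ) < α / 2 + k + 1 := by positivity
  have a1 : α / 2 - (((k : ℤ) + 1 : ℤ) : ℝ) + 1 = α / 2 - k := by push_cast; ring
  have a2 : α / 2 + (((k : ℤ) + 1 : ℤ) : ℝ) + 1 = (α / 2 + k + 1) + 1 := by push_cast; ring
  have a3 : α / 2 - ((k : ℤ) : ℝ) + 1 = (α / 2 - k) + 1 := by push_cast; ring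
  have a4 : α / 2 + ((k : ℤ) : ℝ) + 1 = α / 2 + k + 1 := by push_cast; ring
  unfold fracCoeff
  rw [a1, a2, a3, a4, e1]
  set x : ℝ := α / 2 - k with hx
  set y : ℝ := α / 2 + k + 1 with hy
  have hGy : Real.Gamma (y + 1) = y * Real.Gamma y := Real.Gamma_add_one hy0.ne'
  have hGypos : 0 < Real.Gamma y := Real.Gamma_pos_of_pos hy0
  rcases eq_or_ne x 0 with h0 | h0
  · have hk0 : (k : ℝ) - α / 2 = 0 := by
      have : α / 2 - (k:ℝ) = 0 := by rw [← hx]; exact h0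
      linarith
    have hg0 : Real.Gamma x = 0 := by rw [h0]; exact Real.Gamma_zero
    rw [hk0, mul_zero, hg0, zero_mul, div_zero, zero_mul]
  · have hGx : Real.Gamma (x + 1) = x * Real.Gamma x := Real.Gamma_add_one h0
    have hk' : (k : ℝ) - α / 2 = -x := by rw [hx]; ring
    rw [hGx, hGy, hk']
    rcases eq_or_ne (Real.Gamma x) 0 with hg | hg
    · rw [hg]; simp
    · field_simp

private lemma fracCoeff_tele (α : ℝ) (hα : 0 < α) (k : ℕ) :
    (2 * (k:ℝ) + α) * fracCoeff α (k : ℤ)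
      - (2 * ((k:ℝ) + 1) + α) * fracCoeff α ((k : ℤ) + 1)
    = 2 * α * fracCoeff α (k : ℤ) := by
  have h := fracCoeff_rec α hα k
  linear_combination (-2 : ℝ) * h

private lemma fracCoeff_nonpos (α : ℝ) (hα1 : 1 < α) (hα2 : α ≤ 2) (k : ℕ) :
    fracCoeff α ((k : ℤ) + 1) ≤ 0 := by
  have hα : 0 < α := by linarith
  induction k with
  | zero =>
    have h1 : ((0:ℕ) : ℤ) + 1 = 1 := by norm_num
    rw [h1]
    unfold fracCoeff
    have e1 : ((-1 : ℝ)) ^ (1 : ℤ) = -1 := by norm_num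
    have b1 : α / 2 - ((1 : ℤ) : ℝ) + 1 = α / 2 := by push_cast; ring
    have b2 : α / 2 + ((1 : ℤ) : ℝ) + 1 = α / 2 + 2 := by push_cast; ring
    rw [e1, b1, b2]
    have p1 : 0 < Real.Gamma (α + 1) := Real.Gamma_pos_of_pos (by linarith)
    have p2 : 0 < Real.Gamma (α / 2) := Real.Gamma_pos_of_pos (by linarith)
    have p3 : 0 < Real.Gamma (α / 2 + 2) := Real.Gamma_pos_of_pos (by linarith)
    have : -1 * Real.Gamma (α + 1) ≤ 0 := by linarith
    exact div_nonpos_of_nonpos_of_nonneg this (by positivity)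
  | succ n ih =>
    have h := fracCoeff_rec α hα (n + 1)
    push_cast at h ⊢
    have hpos : (0:ℝ) < α / 2 + ((n:ℝ) + 1) + 1 := by positivity
    have hfac : (0:ℝ) ≤ ((n:ℝ) + 1) - α / 2 := by
      have : (0:ℝ) ≤ (n:ℝ) := Nat.cast_nonneg n
      linarith
    nlinarith [mul_nonneg hfac (neg_nonneg.mpr ih)]

theorem stmt1 (α : ℝ) (hα1 : 1 < α) (hα2 : α ≤ 2) :
    Summable (fun k : ℕ => |fracCoeff α ((k : ℤ) + 1)|) ∧
    (∑' k : ℕ, fracCoeff α ((k : ℤ) + 1)) = -fracCoeff α 0 / 2 ∧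
    (∑' k : ℤ, fracCoeff α k) = 0 := by
  have hα : 0 < α := by linarith
  -- the scaled tail terms and telescoping sequence
  set g : ℕ → ℝ := fun n => -(2 * α * fracCoeff α ((n : ℤ) + 1)) with hg
  set D : ℕ → ℝ := fun n => (2 * ((n:ℝ) + 1) + α) * fracCoeff α ((n : ℤ) + 1) with hD
  have hg0 : ∀ n, 0 ≤ g n := by
    intro n
    have := fracCoeff_nonpos α hα1 hα2 n
    simp only [hg]
    nlinarith
  have hgd : ∀ n : ℕ, g n = D (n + 1) - D n := by
    intro n
    have h := fracCoeff_tele α hα (n + 1)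
    simp only [hg, hD]
    push_cast at h ⊢
    linarith
  have hDnonpos : ∀ n, D n ≤ 0 := by
    intro n
    have h1 := fracCoeff_nonpos α hα1 hα2 n
    have h2 : (0:ℝ) ≤ 2 * ((n:ℝ) + 1) + α := by positivity
    simp only [hD]
    exact mul_nonpos_of_nonneg_of_nonpos h2 h1
  have hsum : ∀ n : ℕ, ∑ i ∈ Finset.range n, g i = D n - D 0 := by
    intro n
    induction n with
    | zero => simp
    | succ m ih => rw [Finset.sum_range_succ, ih, hgd m]; ring
  have hsummg : Summable g := by
    apply summable_of_sum_range_le (c := -D 0) hg0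
    intro n
    rw [hsum n]
    linarith [hDnonpos n]
  -- D is monotone and bounded above, converging to its supremum
  have hmono : Monotone D := monotone_nat_of_le_succ (fun n => by
    have := hg0 n; have := hgd n; linarith)
  have hbdd : BddAbove (Set.range D) := ⟨0, by rintro _ ⟨n, rfl⟩; exact hDnonpos n⟩
  set L : ℝ := ⨆ n, D n with hLdef
  have hL : Tendsto D atTop (nhds L) := tendsto_atTop_ciSup hmono hbdd
  have hL0 : L ≤ 0 := ciSup_le hDnonpos
  -- L must be zero, else g n ≳ 1/n contradicting summability
  have hLzero : L = 0 := by
    by_contra hne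
    have hLlt : L < 0 := lt_of_le_of_ne hL0 hne
    set M : ℝ := -L with hM
    have hMpos : 0 < M := by simp [hM]; linarith
    have hle : ∀ n, D n ≤ L := fun n => le_ciSup hbdd n
    have hk : 0 < α * M := mul_pos hα hMpos
    have key : ∀ n : ℕ, 1 / ((n:ℝ) + 1) ≤ (2 / (α * M)) * g n := by
      intro n
      have h2 : 2 * α * M ≤ (2 * ((n:ℝ) + 1) + α) * g n := by
        have h3 := hle n
        have h4 : 2 * α * D n = -((2 * ((n:ℝ) + 1) + α) * g n) := by
          simp only [hD, hg]; ring
        nlinarith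
      have hna : (0:ℝ) < (n:ℝ) + 1 := by positivity
      rw [div_le_iff₀ hna, div_mul_eq_mul_div, div_mul_eq_mul_div, le_div_iff₀ hk]
      have h5 : (0:ℝ) ≤ 2 * ((n:ℝ) + 1) - α := by
        have : (0:ℝ) ≤ (n:ℝ) := Nat.cast_nonneg n
        linarith
      nlinarith [mul_nonneg (hg0 n) h5]
    have hcon : Summable (fun n : ℕ => 1 / ((n:ℝ) + 1)) :=
      Summable.of_nonneg_of_le (fun n => by positivity) key (hsummg.mul_left _)
    have hcon' : Summable (fun n : ℕ => 1 / (((n + 1 : ℕ)):ℝ)) := by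
      apply hcon.congr
      intro n
      push_cast
      ring
    exact Real.not_summable_one_div_natCast ((summable_nat_add_iff 1).mp hcon')
  -- compute the sum of g
  have htsumg : ∑' n, g n = -D 0 := by
    have h1 : Tendsto (fun n => ∑ i ∈ Finset.range n, g i) atTop (nhds (∑' n, g n)) :=
      hsummg.hasSum.tendsto_sum_nat
    have h2 : Tendsto (fun n => ∑ i ∈ Finset.range n, g i) atTop (nhds (L - D 0)) := by
      have : (fun n => ∑ i ∈ Finset.range n, g i) = fun n => D n - D 0 := funext hsum
      rw [this]
      exact hL.sub_const (D 0)
    have := tendsto_nhds_unique h1 h2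
    rw [this, hLzero]; ring
  -- summability of the coefficients
  have hsumc : Summable (fun n : ℕ => fracCoeff α ((n : ℤ) + 1)) := by
    have : (fun n : ℕ => fracCoeff α ((n : ℤ) + 1)) = fun n => (-(1 / (2 * α))) * g n := by
      funext n
      simp only [hg]
      field_simp
    rw [this]
    exact hsummg.mul_left _
  -- value of the sum of coefficients
  have htsumc : (∑' k : ℕ, fracCoeff α ((k : ℤ) + 1)) = -fracCoeff α 0 / 2 := by
    have h1 : (∑' k : ℕ, fracCoeff α ((k : ℤ) + 1))
        = (-(1 / (2 * α))) * ∑' n, g n := by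
      rw [← tsum_mul_left]
      apply tsum_congr
      intro n
      simp only [hg]
      field_simp
    rw [h1, htsumg]
    -- D 0 = (2 + α) * c_1 and (2+α) c_1 = -α c_0
    have hrec0 := fracCoeff_rec α hα 0
    push_cast at hrec0
    simp only [hD]
    push_cast
    have hc1 : fracCoeff α 1 * (α / 2 + 0 + 1) = fracCoeff α 0 * (0 - α / 2) := hrec0
    field_simp
    nlinarith [hc1]
  refine ⟨?_, htsumc, ?_⟩
  · apply hsummg.mul_left (1 / (2 * α)) |>.congr
    intro n
    rw [abs_of_nonpos (fracCoeff_nonpos α hα1 hα2 n)]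
    simp only [hg]
    field_simp
  · -- sum over ℤ
    have hsF : Summable (fun n : ℕ => fracCoeff α (n : ℤ)) := by
      apply (summable_nat_add_iff 1).mp
      apply hsumc.congr
      intro n
      push_cast
      ring_nf
    have hsFneg : Summable (fun n : ℕ => fracCoeff α (-((n : ℤ) + 1))) := by
      apply hsumc.congr
      intro n
      rw [fracCoeff_neg]
    rw [tsum_of_nat_of_neg_add_one hsF hsFneg]
    have e1 : (∑' n : ℕ, fracCoeff α (-((n : ℤ) + 1))) = -fracCoeff α 0 / 2 := by
      rw [← htsumc]
      apply tsum_congr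
      intro n
      rw [fracCoeff_neg]
    have e2 : (∑' n : ℕ, fracCoeff α (n : ℤ))
        = fracCoeff α 0 + ∑' n : ℕ, fracCoeff α ((n : ℤ) + 1) := by
      rw [Summable.tsum_eq_zero_add hsF]
      congr 1
    rw [e1, e2, htsumc]
    ring
end

section
/- Let 1 < α ≤ 2, let M ≥ 2 be an integer, and let C be the (M−1)×(M−1) Toeplitz matrix with entries C_{ij} = c_{i−j}^(α), where c_k^(α) are the fractional centered difference coefficients. Then C is a real symmetric positive definite matrix. -/
/-!
For a symmetric matrix `A` with row sums `rᵢ`,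
`xᵀAx = ∑ᵢ rᵢ xᵢ² + ½ ∑ᵢⱼ (-aᵢⱼ)(xᵢ - xⱼ)²`.
For `0 < α ≤ 2` the coefficients `c_k`, `k ≠ 0`, are nonpositive, and the reciprocal Gamma
recurrence telescopes to
`α/2 · (c₀ + 2 ∑_{k=1}^{N} c_k) = Γ(α+1) (-1)^N / (Γ(α/2+N+1) Γ(α/2-N)) ≥ 0`.
So every row sum of `C` is nonnegative and the first one is positive; `xᵀCx = 0` then forces
`x₀ = 0` and, because `c_{±1} < 0`, `xᵢ = xᵢ₊₁` for all `i`, i.e. `x = 0`.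
-/

open Finset

namespace Matrix

theorem dotProduct_mulVec_eq_rowSum_add_sum_sq_sub {ι : Type*} [Fintype ι] {A : Matrix ι ι ℝ}
    (hA : A.IsSymm) (x : ι → ℝ) :
    x ⬝ᵥ A *ᵥ x = ∑ i, (∑ j, A i j) * x i ^ 2 + ∑ i, ∑ j, -A i j * (x i - x j) ^ 2 / 2 := by
  have hswap : ∑ i, ∑ j, A i j * x j ^ 2 = ∑ i, ∑ j, A i j * x i ^ 2 := by
    rw [sum_comm]
    exact sum_congr rfl fun i _ => sum_congr rfl fun j _ => by rw [hA.apply i j]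
  have hexpand : ∑ i, ∑ j, -A i j * (x i - x j) ^ 2 / 2 =
      ∑ i, ∑ j, x i * (A i j * x j) -
        (∑ i, ∑ j, A i j * x i ^ 2 + ∑ i, ∑ j, A i j * x j ^ 2) / 2 := by
    simp only [← sum_add_distrib, sum_div, ← sum_sub_distrib]
    exact sum_congr rfl fun i _ => sum_congr rfl fun j _ => by ring
  rw [hexpand, hswap]
  simp only [dotProduct, mulVec, mul_sum, sum_mul]
  ring

theorem posDef_of_rowSum_nonneg_of_superdiag_neg {m : ℕ} {A : Matrix (Fin (m + 1)) (Fin (m + 1)) ℝ}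
    (hA : A.IsSymm) (hoff : ∀ i j, i ≠ j → A i j ≤ 0) (hrow : ∀ i, 0 ≤ ∑ j, A i j)
    (hrow₀ : 0 < ∑ j, A 0 j) (hchain : ∀ i : Fin m, A i.castSucc i.succ < 0) : A.PosDef := by
  refine posDef_iff_dotProduct_mulVec.mpr ⟨isHermitian_iff_isSymm.mpr hA, fun x hx => ?_⟩
  rw [star_trivial, dotProduct_mulVec_eq_rowSum_add_sum_sq_sub hA]
  have hdiag : ∀ i, 0 ≤ (∑ j, A i j) * x i ^ 2 := fun i => by have := hrow i; positivity
  have hedge : ∀ i j, 0 ≤ -A i j * (x i - x j) ^ 2 / 2 := fun i j => by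
    rcases eq_or_ne i j with rfl | hij
    · simp
    · have : 0 ≤ -A i j := neg_nonneg.mpr (hoff i j hij)
      positivity
  refine lt_of_le_of_ne (add_nonneg (sum_nonneg fun i _ => hdiag i)
    (sum_nonneg fun i _ => sum_nonneg fun j _ => hedge i j)) fun h => hx ?_
  rw [eq_comm, add_eq_zero_iff_of_nonneg (sum_nonneg fun i _ => hdiag i)
    (sum_nonneg fun i _ => sum_nonneg fun j _ => hedge i j),
    sum_eq_zero_iff_of_nonneg fun i _ => hdiag i,
    sum_eq_zero_iff_of_nonneg fun i _ => sum_nonneg fun j _ => hedge i j] at h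
  obtain ⟨hdiag₀, hedge₀⟩ := h
  have hx₀ : x 0 = 0 := by
    simpa [hrow₀.ne'] using hdiag₀ 0 (mem_univ _)
  have hstep : ∀ i : Fin m, x i.castSucc = x i.succ := fun i => by
    have h := (sum_eq_zero_iff_of_nonneg fun j _ => hedge _ j).mp (hedge₀ i.castSucc (mem_univ _))
      i.succ (mem_univ _)
    simpa [(hchain i).ne, sub_eq_zero] using h
  funext i
  induction i using Fin.induction with
  | zero => exact hx₀
  | succ i ih => rw [← hstep, ih]; rfl

def toeplitz {R : Type*} (c : ℤ → R) (n : ℕ) : Matrix (Fin n) (Fin n) R :=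
  of fun i j => c (i - j)

theorem toeplitz_isSymm {R : Type*} {c : ℤ → R} (hc : Function.Even c) (n : ℕ) :
    (toeplitz c n).IsSymm :=
  IsSymm.ext fun i j => by simp only [toeplitz, of_apply, ← hc ((i : ℤ) - j), neg_sub]

theorem sum_toeplitz_row {R : Type*} [AddCommMonoid R] {c : ℤ → R} (hc : Function.Even c) {n : ℕ}
    (i : Fin n) :
    ∑ j, toeplitz c n i j =
      c 0 + ∑ k ∈ range i, c (k + 1) + ∑ k ∈ range (n - 1 - i), c (k + 1) := by
  simp only [toeplitz, of_apply]
  rw [Fin.sum_univ_eq_sum_range (fun j => c (i - j)),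
    ← sum_range_add_sum_Ico _ (i.isLt : (i : ℕ) + 1 ≤ n), ← sum_range_reflect, sum_range_succ',
    sum_Ico_eq_sum_range, add_comm (∑ k ∈ range i, _)]
  congr 2
  · simp
  · exact sum_congr rfl fun k hk => congr_arg c (by have := mem_range.mp hk; omega)
  · exact congrArg range (by omega)
  · funext k
    rw [← hc]
    congr 1
    omega

theorem posDef_toeplitz {c : ℤ → ℝ} (hc : Function.Even c) (hc₀ : 0 < c 0) (hc₁ : c 1 < 0)
    (hoff : ∀ k ≠ 0, c k ≤ 0) (hpartial : ∀ N, 0 ≤ c 0 + 2 * ∑ k ∈ range N, c (k + 1)) (n : ℕ) :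
    (toeplitz c n).PosDef := by
  cases n with
  | zero =>
    exact posDef_iff_dotProduct_mulVec.mpr ⟨isHermitian_iff_isSymm.mpr (toeplitz_isSymm hc 0),
      fun x hx => absurd (Subsingleton.elim x 0) hx⟩
  | succ m =>
    have hanti : Antitone fun N => ∑ k ∈ range N, c (k + 1) :=
      antitone_nat_of_succ_le fun N => by
        rw [sum_range_succ]
        linarith [hoff (N + 1) (by omega)]
    refine posDef_of_rowSum_nonneg_of_superdiag_neg (toeplitz_isSymm hc _)
      (fun i j hij => hoff _ ?_) (fun i => ?_) ?_ (fun i => ?_)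
    · exact sub_ne_zero.mpr fun h => hij (Fin.ext (by exact_mod_cast h))
    · rw [sum_toeplitz_row hc]
      have := hanti (show (i : ℕ) ≤ m by omega)
      have := hanti (show m + 1 - 1 - i ≤ m by omega)
      linarith [hpartial m]
    · rw [sum_toeplitz_row hc]
      simp only [Fin.val_zero, range_zero, sum_empty, add_zero, Nat.add_sub_cancel, Nat.sub_zero]
      linarith [hpartial m]
    · simpa [toeplitz, ← hc 1] using hc₁

end Matrix

namespace Real

-- True at the poles as well, where `Gamma` takes the junk value `0`.
theorem inv_Gamma_eq_self_mul_inv_Gamma_add_one (s : ℝ) :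
    (Gamma s)⁻¹ = s * (Gamma (s + 1))⁻¹ := by
  rcases ne_or_eq s 0 with h | rfl
  · rw [Gamma_add_one h, mul_inv, mul_inv_cancel_left₀ h]
  · rw [zero_add, Gamma_zero, inv_zero, zero_mul]

theorem neg_one_pow_mul_inv_Gamma_sub_nonneg {a : ℝ} (ha₀ : 0 < a) (ha₁ : a ≤ 1) (n : ℕ) :
    0 ≤ (-1) ^ n * (Gamma (a - n))⁻¹ := by
  induction n with
  | zero => simpa using (Gamma_pos_of_pos ha₀).le
  | succ n ih =>
    have hrec := inv_Gamma_eq_self_mul_inv_Gamma_add_one (a - (n + 1))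
    rw [show a - (n + 1) + 1 = a - n by ring] at hrec
    have hfactor : 0 ≤ (n : ℝ) + 1 - a := by linarith [n.cast_nonneg (α := ℝ)]
    calc (0 : ℝ) ≤ ((n : ℝ) + 1 - a) * ((-1) ^ n * (Gamma (a - n))⁻¹) := mul_nonneg hfactor ih
      _ = _ := by push_cast; rw [hrec, pow_succ]; ring

end Real

open Real

theorem fracCoeff_even (α : ℝ) : Function.Even (fracCoeff α) := fun k => by
  rw [fracCoeff, fracCoeff, zpow_neg, ← inv_zpow, inv_neg, inv_one]
  push_cast
  ring_nf

theorem fracCoeff_zero_pos {α : ℝ} (hα : 0 < α) : 0 < fracCoeff α 0 := by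
  have := Gamma_pos_of_pos (show 0 < α + 1 by linarith)
  have := Gamma_pos_of_pos (show 0 < α / 2 + 1 by positivity)
  simp only [fracCoeff, zpow_zero, Int.cast_zero, sub_zero, add_zero, one_mul]
  positivity

theorem fracCoeff_natCast_add_one (α : ℝ) (n : ℕ) :
    fracCoeff α (n + 1) =
      -(Gamma (α + 1) * (Gamma (α / 2 + n + 2))⁻¹) * ((-1) ^ n * (Gamma (α / 2 - n))⁻¹) := by
  rw [fracCoeff, div_eq_mul_inv, mul_inv, zpow_add_one₀ (by norm_num), zpow_natCast]
  push_cast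
  ring_nf

theorem fracCoeff_natCast_add_one_nonpos {α : ℝ} (hα₀ : 0 < α) (hα₂ : α ≤ 2) (n : ℕ) :
    fracCoeff α (n + 1) ≤ 0 := by
  rw [fracCoeff_natCast_add_one]
  have := Gamma_pos_of_pos (show 0 < α + 1 by linarith)
  have := Gamma_pos_of_pos (show 0 < α / 2 + n + 2 by positivity)
  exact mul_nonpos_of_nonpos_of_nonneg (by simp only [neg_nonpos]; positivity)
    (neg_one_pow_mul_inv_Gamma_sub_nonneg (by positivity) (by linarith) n)

theorem fracCoeff_one_neg {α : ℝ} (hα : 0 < α) : fracCoeff α 1 < 0 := by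
  have h := fracCoeff_natCast_add_one α 0
  simp only [Nat.cast_zero, zero_add, add_zero, pow_zero, sub_zero, one_mul] at h
  have := Gamma_pos_of_pos (show 0 < α + 1 by linarith)
  have := Gamma_pos_of_pos (show 0 < α / 2 + 2 by positivity)
  have := Gamma_pos_of_pos (show 0 < α / 2 by positivity)
  rw [h, neg_mul, neg_lt_zero]
  positivity

theorem fracCoeff_nonpos_s2 {α : ℝ} (hα₀ : 0 < α) (hα₂ : α ≤ 2) {k : ℤ} (hk : k ≠ 0) :
    fracCoeff α k ≤ 0 := by
  obtain ⟨n, rfl | rfl⟩ : ∃ n : ℕ, k = n + 1 ∨ k = -(n + 1) := by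
    rcases lt_or_gt_of_ne hk with h | h
    · exact ⟨(-k - 1).toNat, Or.inr (by omega)⟩
    · exact ⟨(k - 1).toNat, Or.inl (by omega)⟩
  · exact fracCoeff_natCast_add_one_nonpos hα₀ hα₂ n
  · rw [fracCoeff_even]; exact fracCoeff_natCast_add_one_nonpos hα₀ hα₂ n

theorem half_mul_fracCoeff_partialSum_eq (α : ℝ) (N : ℕ) :
    α / 2 * (fracCoeff α 0 + 2 * ∑ k ∈ range N, fracCoeff α (k + 1)) =
      Gamma (α + 1) * (Gamma (α / 2 + N + 1))⁻¹ * ((-1) ^ N * (Gamma (α / 2 - N))⁻¹) := by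
  induction N with
  | zero =>
    have := inv_Gamma_eq_self_mul_inv_Gamma_add_one (α / 2)
    simp only [fracCoeff, range_zero, sum_empty, mul_zero, add_zero, zpow_zero, Int.cast_zero,
      sub_zero, Nat.cast_zero, pow_zero, one_mul]
    rw [this, div_eq_mul_inv (Gamma _), mul_inv]
    ring
  | succ N ih =>
    have h₁ := inv_Gamma_eq_self_mul_inv_Gamma_add_one (α / 2 + N + 1)
    have h₂ := inv_Gamma_eq_self_mul_inv_Gamma_add_one (α / 2 - (N + 1))
    rw [show α / 2 + N + 1 + 1 = α / 2 + N + 2 by ring] at h₁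
    rw [show α / 2 - (N + 1) + 1 = α / 2 - N by ring] at h₂
    rw [sum_range_succ, mul_add 2, ← add_assoc, mul_add, ih, fracCoeff_natCast_add_one]
    push_cast
    rw [h₁, h₂, pow_succ, show α / 2 + (N + 1) + 1 = α / 2 + N + 2 by ring]
    ring

theorem fracCoeff_partialSum_nonneg {α : ℝ} (hα₀ : 0 < α) (hα₂ : α ≤ 2) (N : ℕ) :
    0 ≤ fracCoeff α 0 + 2 * ∑ k ∈ range N, fracCoeff α (k + 1) := by
  have h := half_mul_fracCoeff_partialSum_eq α N
  have := Gamma_pos_of_pos (show 0 < α + 1 by linarith)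
  have := Gamma_pos_of_pos (show 0 < α / 2 + N + 1 by positivity)
  have := neg_one_pow_mul_inv_Gamma_sub_nonneg (a := α / 2) (by positivity) (by linarith) N
  exact nonneg_of_mul_nonneg_right (h ▸ by positivity) (show 0 < α / 2 by positivity)

theorem fracCoeff_toeplitz_posDef {α : ℝ} (hα₀ : 0 < α) (hα₂ : α ≤ 2) (n : ℕ) :
    (Matrix.toeplitz (fracCoeff α) n).PosDef :=
  Matrix.posDef_toeplitz (fracCoeff_even α) (fracCoeff_zero_pos hα₀) (fracCoeff_one_neg hα₀)
    (fun _ hk => fracCoeff_nonpos_s2 hα₀ hα₂ hk) (fracCoeff_partialSum_nonneg hα₀ hα₂) n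

theorem stmt2_general (α : ℝ) (hα1 : 1 < α) (hα2 : α ≤ 2) (M : ℕ)
    (Cm : Matrix (Fin (M - 1)) (Fin (M - 1)) ℝ)
    (hC : ∀ i j, Cm i j = fracCoeff α ((i : ℤ) - (j : ℤ))) :
    Cm.IsSymm ∧ Cm.PosDef := by
  have hCm : Cm = Matrix.toeplitz (fracCoeff α) (M - 1) := Matrix.ext hC
  have hpos : Cm.PosDef := hCm ▸ fracCoeff_toeplitz_posDef (by linarith) hα2 (M - 1)
  exact ⟨Matrix.isHermitian_iff_isSymm.mp hpos.isHermitian, hpos⟩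

theorem stmt2 (α : ℝ) (hα1 : 1 < α) (hα2 : α ≤ 2) (M : ℕ) (hM : 2 ≤ M)
    (Cm : Matrix (Fin (M - 1)) (Fin (M - 1)) ℝ)
    (hC : ∀ i j, Cm i j = fracCoeff α ((i : ℤ) - (j : ℤ))) :
    Cm.IsSymm ∧ Cm.PosDef :=
  stmt2_general α hα1 hα2 M Cm hC
end

section
/- Let 1 < α ≤ 2, let M ≥ 2 be an integer, let h > 0, let C be the (M−1)×(M−1) Toeplitz matrix with entries C_{ij} = c_{i−j}^(α), and set D = h^{−α} C. Then there exists τ₀ > 0 such that for all 0 < τ < τ₀ and every vector b ∈ ℝ^{M−1}, the 3(M−1)×3(M−1) block matrix 𝒜 = [[I, −(τ/2)I, 0], [−(τ/2)D, I, (τ/2) diag(B(b))], [0, −(τ/2) diag(B(b)), 2I]], where diag(B(b)) is the diagonal matrix with entries B(b_j) = sin(b_j)/√(2 − cos(b_j)), is invertible. Consequently the linear IEQ-CN scheme is uniquely solvable for sufficiently small τ. -/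
/-- `B(x) = sin x / √(2 − cos x)`. -/
noncomputable def Bfun (x : ℝ) : ℝ := Real.sin x / Real.sqrt (2 - Real.cos x)

open Filter Topology Matrix

section MatrixTopology

variable {X R m₁ m₂ n : Type*} [TopologicalSpace X] [TopologicalSpace R]

@[fun_prop]
theorem Continuous.matrix_fromRows {A₁ : X → Matrix m₁ n R} {A₂ : X → Matrix m₂ n R}
    (h₁ : Continuous A₁) (h₂ : Continuous A₂) : Continuous fun x => fromRows (A₁ x) (A₂ x) :=
  continuous_matrix <| by rintro (i | i) j <;> refine Continuous.matrix_elem ?_ i j <;> assumption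

@[fun_prop]
theorem Continuous.matrix_fromCols {A₁ : X → Matrix n m₁ R} {A₂ : X → Matrix n m₂ R}
    (h₁ : Continuous A₁) (h₂ : Continuous A₂) : Continuous fun x => fromCols (A₁ x) (A₂ x) :=
  continuous_matrix <| by rintro i (j | j) <;> refine Continuous.matrix_elem ?_ i j <;> assumption

end MatrixTopology

theorem eventually_forall_isUnit_of_isCompact {X Y 𝕜 n : Type*} [TopologicalSpace X]
    [TopologicalSpace Y] [Field 𝕜] [TopologicalSpace 𝕜] [IsTopologicalRing 𝕜] [T1Space 𝕜]
    [Fintype n] [DecidableEq n] {A : X × Y → Matrix n n 𝕜} (hA : Continuous A) {x₀ : X}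
    {K : Set Y} (hK : IsCompact K) (h₀ : ∀ y ∈ K, IsUnit (A (x₀, y))) :
    ∀ᶠ x in 𝓝 x₀, ∀ y ∈ K, IsUnit (A (x, y)) := by
  refine hK.eventually_forall_of_forall_eventually fun y hy => ?_
  simp only [isUnit_iff_isUnit_det, isUnit_iff_ne_zero] at h₀ ⊢
  exact hA.matrix_det.continuousAt.eventually_ne (h₀ y hy)

theorem abs_Bfun_le_one (x : ℝ) : |Bfun x| ≤ 1 := by
  have hsqrt : 1 ≤ √(2 - Real.cos x) :=
    Real.one_le_sqrt.mpr (by linarith [Real.cos_le_one x])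
  rw [Bfun, abs_div, abs_of_nonneg (Real.sqrt_nonneg _), div_le_one (by linarith)]
  exact (Real.abs_sin_le_one x).trans hsqrt

section IEQCN

variable {n : Type*} [DecidableEq n]

noncomputable def ieqCNMatrix (D : Matrix n n ℝ) (τ : ℝ) (β : n → ℝ) :
    Matrix ((n ⊕ n) ⊕ n) ((n ⊕ n) ⊕ n) ℝ :=
  fromBlocks (fromBlocks 1 (-(τ / 2) • (1 : Matrix n n ℝ)) (-(τ / 2) • D) 1)
    (fromRows 0 ((τ / 2) • diagonal β)) (fromCols 0 (-(τ / 2) • diagonal β))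
    ((2 : ℝ) • (1 : Matrix n n ℝ))

theorem continuous_ieqCNMatrix (D : Matrix n n ℝ) :
    Continuous fun p : ℝ × (n → ℝ) => ieqCNMatrix D p.1 p.2 := by
  unfold ieqCNMatrix
  fun_prop

theorem isUnit_ieqCNMatrix_zero [Fintype n] (D : Matrix n n ℝ) (β : n → ℝ) :
    IsUnit (ieqCNMatrix D 0 β) := by
  have : ieqCNMatrix D 0 β = diagonal (Sum.elim (Sum.elim 1 1) fun _ => 2) := by
    simp [ieqCNMatrix, ← fromBlocks_diagonal, fromRows_zero, fromCols_zero, smul_one_eq_diagonal]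
  rw [this, isUnit_diagonal, Pi.isUnit_iff]
  rintro ((i | i) | i) <;> simp

end IEQCN

theorem stmt11_general (M : ℕ) (D : Matrix (Fin (M - 1)) (Fin (M - 1)) ℝ):
    ∃ τ₀ : ℝ, 0 < τ₀ ∧ ∀ τ : ℝ, 0 < τ → τ < τ₀ → ∀ b : Fin (M - 1) → ℝ,
      IsUnit
        (Matrix.fromBlocks
          (Matrix.fromBlocks 1 (-(τ / 2) • (1 : Matrix (Fin (M - 1)) (Fin (M - 1)) ℝ))
            (-(τ / 2) • D) 1)
          (Matrix.fromRows 0 ((τ / 2) • Matrix.diagonal (fun j => Bfun (b j))))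
          (Matrix.fromCols 0 (-(τ / 2) • Matrix.diagonal (fun j => Bfun (b j))))
          ((2 : ℝ) • (1 : Matrix (Fin (M - 1)) (Fin (M - 1)) ℝ))) := by
  obtain ⟨τ₀, hτ₀, hunit⟩ := Metric.eventually_nhds_iff.mp <|
    eventually_forall_isUnit_of_isCompact (x₀ := 0) (continuous_ieqCNMatrix D) isCompact_Icc
      fun β _ => isUnit_ieqCNMatrix_zero D β
  refine ⟨τ₀, hτ₀, fun τ hτ hττ₀ b => hunit ?_ (fun j => Bfun (b j)) ?_⟩
  · rwa [Real.dist_0_eq_abs, abs_of_pos hτ]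
  · have hB (j) : -1 ≤ Bfun (b j) ∧ Bfun (b j) ≤ 1 := abs_le.mp (abs_Bfun_le_one (b j))
    exact ⟨fun j => (hB j).1, fun j => (hB j).2⟩

theorem stmt11 (α : ℝ) (hα1 : 1 < α) (hα2 : α ≤ 2) (M : ℕ) (hM : 2 ≤ M)
    (h : ℝ) (hh : 0 < h)
    (Cm : Matrix (Fin (M - 1)) (Fin (M - 1)) ℝ)
    (hC : ∀ i j, Cm i j = fracCoeff α ((i : ℤ) - (j : ℤ)))
    (D : Matrix (Fin (M - 1)) (Fin (M - 1)) ℝ) (hD : D = h ^ (-α) • Cm) :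
    ∃ τ₀ : ℝ, 0 < τ₀ ∧ ∀ τ : ℝ, 0 < τ → τ < τ₀ → ∀ b : Fin (M - 1) → ℝ,
      IsUnit
        (Matrix.fromBlocks
          (Matrix.fromBlocks 1 (-(τ / 2) • (1 : Matrix (Fin (M - 1)) (Fin (M - 1)) ℝ))
            (-(τ / 2) • D) 1)
          (Matrix.fromRows 0 ((τ / 2) • Matrix.diagonal (fun j => Bfun (b j))))
          (Matrix.fromCols 0 (-(τ / 2) • Matrix.diagonal (fun j => Bfun (b j))))
          ((2 : ℝ) • (1 : Matrix (Fin (M - 1)) (Fin (M - 1)) ℝ))) :=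
  stmt11_general M D
end
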